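/- Let X be a finite-valued random variable, and suppose nonnegative reals R, R1, R2, R' and finite-valued random variables Q, U, V are given such that U and V are independent, H(U) ≤ R1, H(V) ≤ R2, R ≥ I(Q;V|U) + R', R ≥ I(Q;U|V) + R', and H(X) ≤ I(Q;U,V) + R'. If additionally R' = 0, then 2R ≥ H(X); and in all cases R + R1 ≥ H(X) and R + R2 ≥ H(X). -/

import Mathlib

open scoped BigOperators

/-- A probability mass function on a finite sample space. -/
structure FinPMF (Ω : Type*) [Fintype Ω] where
  p : Ω → ℝ
  nonneg : ∀ ω, 0 ≤ p ω
  sum_one : ∑ ω, p ω = 1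

namespace FinPMF

variable {Ω : Type*} [Fintype Ω]

/-- Probability that the random variable `X` takes the value `a`. -/
def pr (μ : FinPMF Ω) {A : Type*} [DecidableEq A] (X : Ω → A) (a : A) : ℝ :=
  ∑ ω, if X ω = a then μ.p ω else 0

/-- Shannon entropy (base 2, i.e. in bits) of the random variable `X`. -/
noncomputable def H (μ : FinPMF Ω) {A : Type*} [Fintype A] [DecidableEq A]
    (X : Ω → A) : ℝ :=
  -∑ a, μ.pr X a * Real.logb 2 (μ.pr X a)

/-- Conditional entropy `H(X|Z)`. -/
noncomputable def CondH (μ : FinPMF Ω) {A C : Type*} [Fintype A] [DecidableEq A]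
    [Fintype C] [DecidableEq C] (X : Ω → A) (Z : Ω → C) : ℝ :=
  μ.H (fun ω => (X ω, Z ω)) - μ.H Z

/-- Mutual information `I(X;Y)`. -/
noncomputable def I2 (μ : FinPMF Ω) {A B : Type*} [Fintype A] [DecidableEq A]
    [Fintype B] [DecidableEq B] (X : Ω → A) (Y : Ω → B) : ℝ :=
  μ.H X + μ.H Y - μ.H (fun ω => (X ω, Y ω))

/-- Conditional mutual information `I(X;Y|Z)`. -/
noncomputable def CI (μ : FinPMF Ω) {A B C : Type*} [Fintype A] [DecidableEq A]
    [Fintype B] [DecidableEq B] [Fintype C] [DecidableEq C]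
    (X : Ω → A) (Y : Ω → B) (Z : Ω → C) : ℝ :=
  μ.H (fun ω => (X ω, Z ω)) + μ.H (fun ω => (Y ω, Z ω))
    - μ.H (fun ω => (X ω, Y ω, Z ω)) - μ.H Z

/-- `X` and `Y` are independent. -/
def Indep (μ : FinPMF Ω) {A B : Type*} [DecidableEq A] [DecidableEq B]
    (X : Ω → A) (Y : Ω → B) : Prop :=
  ∀ a b, μ.pr (fun ω => (X ω, Y ω)) (a, b) = μ.pr X a * μ.pr Y b

/-- `X` and `Y` are conditionally independent given `Z` (Markov chain `X − Z − Y`). -/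
def CondIndep (μ : FinPMF Ω) {A B C : Type*} [DecidableEq A] [DecidableEq B]
    [DecidableEq C] (X : Ω → A) (Y : Ω → B) (Z : Ω → C) : Prop :=
  ∀ a b c, μ.pr (fun ω => (X ω, Y ω, Z ω)) (a, b, c) * μ.pr Z c
    = μ.pr (fun ω => (X ω, Z ω)) (a, c) * μ.pr (fun ω => (Y ω, Z ω)) (b, c)

end FinPMF

/-- Binary entropy function (base 2). -/
noncomputable def binEnt (t : ℝ) : ℝ :=
  -(t * Real.logb 2 t) - (1 - t) * Real.logb 2 (1 - t)

/-!
By the chain rule, `I(Q;U,V) = I(Q;U) + I(Q;V|U) ≤ H(U) + I(Q;V|U)`, which gives the bounds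
`R + R1` and, symmetrically, `R + R2`. When `U` and `V` are independent, the gap
`I(Q;V|U) + I(Q;U|V) - I(Q;U,V)` is `I(U;V|Q) = H(Q,U) + H(Q,V) - H(Q) - H(Q,U,V) ≥ 0`. This
submodularity of entropy is Gibbs' inequality comparing the law of `(Q,U,V)` with the coupling
`p(q,u) p(q,v) / p(q)` of `U` and `V` that is conditionally independent given `Q`.
-/

lemma sum_mul_logb_le {ι : Type*} [Fintype ι] {w t : ι → ℝ} (hw : ∀ i, 0 ≤ w i)
    (ht : ∀ i, 0 < w i → 0 < t i) :
    ∑ i, w i * Real.logb 2 (t i) ≤ (∑ i, w i * t i - ∑ i, w i) / Real.log 2 := by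
  rw [← Finset.sum_sub_distrib, Finset.sum_div]
  refine Finset.sum_le_sum fun i _ => ?_
  rcases (hw i).eq_or_lt with h0 | h0
  · simp [← h0]
  rw [Real.logb, ← mul_sub_one, mul_div_assoc]
  gcongr
  exact Real.log_le_sub_one_of_pos (ht i h0)

namespace FinPMF

variable {Ω : Type*} [Fintype Ω] (μ : FinPMF Ω)

lemma pr_nonneg {A : Type*} [DecidableEq A] (X : Ω → A) (a : A) : 0 ≤ μ.pr X a :=
  Finset.sum_nonneg fun ω _ => by split_ifs <;> simp [μ.nonneg ω]

lemma p_le_pr {A : Type*} [DecidableEq A] (X : Ω → A) (ω : Ω) : μ.p ω ≤ μ.pr X (X ω) := by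
  unfold pr
  simpa using Finset.single_le_sum (f := fun ω' => if X ω' = X ω then μ.p ω' else 0)
    (fun ω' _ => by split_ifs <;> simp [μ.nonneg ω']) (Finset.mem_univ ω)

lemma pr_pos_of_p_pos {A : Type*} [DecidableEq A] (X : Ω → A) {ω : Ω} (h : 0 < μ.p ω) :
    0 < μ.pr X (X ω) :=
  h.trans_le (μ.p_le_pr X ω)

lemma sum_pr_mul {A : Type*} [Fintype A] [DecidableEq A] (X : Ω → A) (f : A → ℝ) :
    ∑ a, μ.pr X a * f a = ∑ ω, μ.p ω * f (X ω) := by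
  simp only [pr, Finset.sum_mul]
  rw [Finset.sum_comm]
  refine Finset.sum_congr rfl fun ω _ => ?_
  simp [ite_mul]

lemma sum_pr {A : Type*} [Fintype A] [DecidableEq A] (X : Ω → A) : ∑ a, μ.pr X a = 1 := by
  simpa [μ.sum_one] using μ.sum_pr_mul X 1

lemma pr_eq_sum_pr_prod {A B : Type*} [DecidableEq A] [Fintype B] [DecidableEq B]
    (X : Ω → A) (Y : Ω → B) (a : A) :
    μ.pr X a = ∑ b, μ.pr (fun ω => (X ω, Y ω)) (a, b) := by
  simp only [pr]
  rw [Finset.sum_comm]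
  refine Finset.sum_congr rfl fun ω _ => ?_
  by_cases h : X ω = a <;> simp [Prod.ext_iff, h]

lemma pr_comp_of_injective {A B : Type*} [DecidableEq A] [DecidableEq B] (W : Ω → B)
    {f : B → A} (hf : f.Injective) (b : B) : μ.pr (fun ω => f (W ω)) (f b) = μ.pr W b := by
  simp only [pr, hf.eq_iff]

lemma H_eq_neg_sum {A : Type*} [Fintype A] [DecidableEq A] (X : Ω → A) :
    μ.H X = -∑ ω, μ.p ω * Real.logb 2 (μ.pr X (X ω)) := by
  rw [H, μ.sum_pr_mul X fun a => Real.logb 2 (μ.pr X a)]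

lemma H_comp_of_injective {A B : Type*} [Fintype A] [DecidableEq A] [Fintype B] [DecidableEq B]
    (W : Ω → B) {f : B → A} (hf : f.Injective) : μ.H (fun ω => f (W ω)) = μ.H W := by
  simp only [H_eq_neg_sum, μ.pr_comp_of_injective W hf]

lemma H_prod_of_indep {A B : Type*} [Fintype A] [DecidableEq A] [Fintype B] [DecidableEq B]
    {U : Ω → A} {V : Ω → B} (h : μ.Indep U V) :
    μ.H (fun ω => (U ω, V ω)) = μ.H U + μ.H V := by
  simp only [H_eq_neg_sum, h _ _, ← neg_add, ← Finset.sum_add_distrib, neg_inj]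
  refine Finset.sum_congr rfl fun ω _ => ?_
  rcases (μ.nonneg ω).eq_or_lt with h0 | h0
  · simp [← h0]
  rw [Real.logb_mul (μ.pr_pos_of_p_pos U h0).ne' (μ.pr_pos_of_p_pos V h0).ne', mul_add]

lemma H_prod_comm {A B : Type*} [Fintype A] [DecidableEq A] [Fintype B] [DecidableEq B]
    (X : Ω → A) (Y : Ω → B) : μ.H (fun ω => (Y ω, X ω)) = μ.H (fun ω => (X ω, Y ω)) :=
  μ.H_comp_of_injective (fun ω => (X ω, Y ω)) Prod.swap_injective

variable {𝒬 𝒰 𝒱 : Type*} [Fintype 𝒬] [DecidableEq 𝒬] [Fintype 𝒰] [DecidableEq 𝒰]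
  [Fintype 𝒱] [DecidableEq 𝒱] (Q : Ω → 𝒬) (U : Ω → 𝒰) (V : Ω → 𝒱)

lemma sum_p_mul_condIndep_ratio_le_one :
    ∑ ω, μ.p ω * (μ.pr (fun ω => (Q ω, U ω)) (Q ω, U ω) * μ.pr (fun ω => (Q ω, V ω)) (Q ω, V ω)
      / (μ.pr Q (Q ω) * μ.pr (fun ω => (Q ω, U ω, V ω)) (Q ω, U ω, V ω))) ≤ 1 := by
  set pQU := μ.pr fun ω => (Q ω, U ω) with hQU
  set pQV := μ.pr fun ω => (Q ω, V ω) with hQV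
  set pQUV := μ.pr fun ω => (Q ω, U ω, V ω)
  rw [← μ.sum_pr_mul (fun ω => (Q ω, U ω, V ω))
    fun x => pQU (x.1, x.2.1) * pQV (x.1, x.2.2) / (μ.pr Q x.1 * pQUV x)]
  calc ∑ x, pQUV x * (pQU (x.1, x.2.1) * pQV (x.1, x.2.2) / (μ.pr Q x.1 * pQUV x))
      ≤ ∑ x : 𝒬 × 𝒰 × 𝒱, pQU (x.1, x.2.1) * pQV (x.1, x.2.2) / μ.pr Q x.1 := by
        refine Finset.sum_le_sum fun x _ => ?_
        have hnum : 0 ≤ pQU (x.1, x.2.1) * pQV (x.1, x.2.2) / μ.pr Q x.1 :=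
          div_nonneg (mul_nonneg (μ.pr_nonneg _ _) (μ.pr_nonneg _ _)) (μ.pr_nonneg _ _)
        rcases eq_or_ne (pQUV x) 0 with h0 | h0
        · simpa [h0] using hnum
        · rw [mul_comm (μ.pr Q x.1), ← div_div, mul_div_assoc', mul_div_cancel₀ _ h0]
    _ = ∑ q, μ.pr Q q * μ.pr Q q / μ.pr Q q := by
        simp only [Fintype.sum_prod_type, ← Finset.sum_div, ← Finset.sum_mul_sum, hQU, hQV,
          ← μ.pr_eq_sum_pr_prod]
    _ ≤ ∑ q, μ.pr Q q := Finset.sum_le_sum fun q _ => (mul_self_div_self _).le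
    _ = 1 := μ.sum_pr Q

lemma H_submodular :
    μ.H Q + μ.H (fun ω => (Q ω, U ω, V ω))
      ≤ μ.H (fun ω => (Q ω, U ω)) + μ.H (fun ω => (Q ω, V ω)) := by
  set pQU := μ.pr fun ω => (Q ω, U ω)
  set pQV := μ.pr fun ω => (Q ω, V ω)
  set pQUV := μ.pr fun ω => (Q ω, U ω, V ω)
  set ratio := fun ω => pQU (Q ω, U ω) * pQV (Q ω, V ω) / (μ.pr Q (Q ω) * pQUV (Q ω, U ω, V ω))
  have hmarg_pos : ∀ ω, 0 < μ.p ω → 0 < pQU (Q ω, U ω) ∧ 0 < pQV (Q ω, V ω) ∧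
      0 < μ.pr Q (Q ω) ∧ 0 < pQUV (Q ω, U ω, V ω) := fun ω h =>
    ⟨μ.pr_pos_of_p_pos _ h, μ.pr_pos_of_p_pos _ h, μ.pr_pos_of_p_pos _ h, μ.pr_pos_of_p_pos _ h⟩
  have hpos : ∀ ω, 0 < μ.p ω → 0 < ratio ω := fun ω h => by
    obtain ⟨h1, h2, h3, h4⟩ := hmarg_pos ω h
    positivity
  have hgibbs : ∑ ω, μ.p ω * Real.logb 2 (ratio ω) ≤ 0 := by
    refine (sum_mul_logb_le μ.nonneg hpos).trans (div_nonpos_of_nonpos_of_nonneg ?_ ?_)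
    · linarith [μ.sum_p_mul_condIndep_ratio_le_one Q U V, μ.sum_one]
    · exact Real.log_nonneg one_le_two
  have hsplit : ∀ ω, μ.p ω * Real.logb 2 (ratio ω) =
      μ.p ω * Real.logb 2 (pQU (Q ω, U ω)) + μ.p ω * Real.logb 2 (pQV (Q ω, V ω))
        - μ.p ω * Real.logb 2 (μ.pr Q (Q ω)) - μ.p ω * Real.logb 2 (pQUV (Q ω, U ω, V ω)) := by
    intro ω
    rcases (μ.nonneg ω).eq_or_lt with h0 | h0
    · simp [← h0]
    obtain ⟨h1, h2, h3, h4⟩ := hmarg_pos ω h0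
    rw [Real.logb_div (by positivity) (by positivity), Real.logb_mul h1.ne' h2.ne',
      Real.logb_mul h3.ne' h4.ne']
    ring
  simp only [hsplit, Finset.sum_sub_distrib, Finset.sum_add_distrib] at hgibbs
  simp only [H_eq_neg_sum]
  linarith

lemma H_prod_prod_comm :
    μ.H (fun ω => (Q ω, V ω, U ω)) = μ.H (fun ω => (Q ω, U ω, V ω)) :=
  μ.H_comp_of_injective (fun ω => (Q ω, U ω, V ω))
    (Function.injective_id.prodMap Prod.swap_injective)

lemma H_le_H_prod : μ.H Q ≤ μ.H (fun ω => (Q ω, U ω)) := by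
  have hdiag : μ.H (fun ω => (Q ω, U ω, U ω)) = μ.H (fun ω => (Q ω, U ω)) :=
    μ.H_comp_of_injective (fun ω => (Q ω, U ω)) (f := fun x => (x.1, x.2, x.2))
      fun x y h => by simpa [Prod.ext_iff] using h
  linarith [μ.H_submodular Q U U]

lemma I2_prod_comm : μ.I2 Q (fun ω => (V ω, U ω)) = μ.I2 Q (fun ω => (U ω, V ω)) := by
  rw [I2, I2, μ.H_prod_comm U V, μ.H_prod_prod_comm Q U V]

lemma I2_prod_le_CI_add_H : μ.I2 Q (fun ω => (U ω, V ω)) ≤ μ.CI Q V U + μ.H U := by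
  rw [I2, CI, μ.H_prod_comm U V, μ.H_prod_prod_comm Q U V]
  linarith [μ.H_le_H_prod Q U]

lemma I2_prod_le_CI_add_CI_of_indep (h : μ.Indep U V) :
    μ.I2 Q (fun ω => (U ω, V ω)) ≤ μ.CI Q V U + μ.CI Q U V := by
  rw [I2, CI, CI, μ.H_prod_comm U V, μ.H_prod_prod_comm Q U V]
  linarith [μ.H_submodular Q U V, μ.H_prod_of_indep h]

end FinPMF

theorem stmt17_general {Ω 𝒳 𝒬 𝒰 𝒱 : Type*} [Fintype Ω]
    [Fintype 𝒳] [DecidableEq 𝒳] [Fintype 𝒬] [DecidableEq 𝒬]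
    [Fintype 𝒰] [DecidableEq 𝒰] [Fintype 𝒱] [DecidableEq 𝒱]
    (μ : FinPMF Ω) (X : Ω → 𝒳) (Q : Ω → 𝒬) (U : Ω → 𝒰) (V : Ω → 𝒱)
    (R R1 R2 R' : ℝ)
    (hInd : μ.Indep U V)
    (hHU : μ.H U ≤ R1) (hHV : μ.H V ≤ R2)
    (hRa : μ.CI Q V U + R' ≤ R) (hRb : μ.CI Q U V + R' ≤ R)
    (hHX : μ.H X ≤ μ.I2 Q (fun ω => (U ω, V ω)) + R') :
    (R' = 0 → μ.H X ≤ 2 * R) ∧ μ.H X ≤ R + R1 ∧ μ.H X ≤ R + R2 := by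
  refine ⟨fun hR' => ?_, ?_, ?_⟩
  · subst hR'
    linarith [μ.I2_prod_le_CI_add_CI_of_indep Q U V hInd]
  · linarith [μ.I2_prod_le_CI_add_H Q U V]
  · linarith [μ.I2_prod_le_CI_add_H Q V U, μ.I2_prod_comm Q U V]

/-- Given `U ⊥ V`, `H(U) ≤ R1`, `H(V) ≤ R2`, `R ≥ I(Q;V|U) + R'`,
`R ≥ I(Q;U|V) + R'`, and `H(X) ≤ I(Q;U,V) + R'`, we get `R + R1 ≥ H(X)`,
`R + R2 ≥ H(X)`, and if `R' = 0` also `2R ≥ H(X)`. -/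
theorem stmt17 {Ω 𝒳 𝒬 𝒰 𝒱 : Type*} [Fintype Ω]
    [Fintype 𝒳] [DecidableEq 𝒳] [Fintype 𝒬] [DecidableEq 𝒬]
    [Fintype 𝒰] [DecidableEq 𝒰] [Fintype 𝒱] [DecidableEq 𝒱]
    (μ : FinPMF Ω) (X : Ω → 𝒳) (Q : Ω → 𝒬) (U : Ω → 𝒰) (V : Ω → 𝒱)
    (R R1 R2 R' : ℝ) (hR : 0 ≤ R) (hR1 : 0 ≤ R1) (hR2 : 0 ≤ R2) (hR' : 0 ≤ R')
    (hInd : μ.Indep U V)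
    (hHU : μ.H U ≤ R1) (hHV : μ.H V ≤ R2)
    (hRa : μ.CI Q V U + R' ≤ R) (hRb : μ.CI Q U V + R' ≤ R)
    (hHX : μ.H X ≤ μ.I2 Q (fun ω => (U ω, V ω)) + R') :
    (R' = 0 → μ.H X ≤ 2 * R) ∧ μ.H X ≤ R + R1 ∧ μ.H X ≤ R + R2 :=
  stmt17_general μ X Q U V R R1 R2 R' hInd hHU hHV hRa hRb hHX
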